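/- arXiv:2106.06827 — 2 statements merged into one kernel-verified Lean document; each statement's English description precedes it below -/
import Mathlib

section
/- For any tree T with at least two vertices, the general position number of T equals the number of leaves of T. -/
open SimpleGraph

/-- A walk is an *induced (monophonic) path* if it is a path and vertices on the
walk are adjacent in `G` exactly when they are consecutive on the walk. -/
def IsInducedPathW {V : Type*} (G : SimpleGraph V) {u v : V} (p : G.Walk u v) : Prop :=
  p.IsPath ∧ ∀ a b : V, a ∈ p.support → b ∈ p.support → (G.Adj a b ↔ p.toSubgraph.Adj a b)

/-- A walk is a *geodesic* if it is a shortest path between its endpoints. -/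
def IsGeodesicW {V : Type*} (G : SimpleGraph V) {u v : V} (p : G.Walk u v) : Prop :=
  p.IsPath ∧ p.length = G.dist u v

/-- A set of vertices is in *monophonic position* if no induced path of `G`
contains more than two of its vertices. -/
def IsMpSet {V : Type*} (G : SimpleGraph V) (S : Set V) : Prop :=
  ∀ ⦃u v : V⦄ (p : G.Walk u v), IsInducedPathW G p → (S ∩ {x | x ∈ p.support}).ncard ≤ 2

/-- A set of vertices is in *general position* if no geodesic of `G` contains
more than two of its vertices. -/
def IsGpSet {V : Type*} (G : SimpleGraph V) (S : Set V) : Prop :=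
  ∀ ⦃u v : V⦄ (p : G.Walk u v), IsGeodesicW G p → (S ∩ {x | x ∈ p.support}).ncard ≤ 2

/-- The monophonic position number `mp(G)`. -/
noncomputable def mpNum {V : Type*} (G : SimpleGraph V) : ℕ :=
  sSup {n | ∃ S : Set V, IsMpSet G S ∧ S.ncard = n}

/-- The general position number `gp(G)`. -/
noncomputable def gpNum {V : Type*} (G : SimpleGraph V) : ℕ :=
  sSup {n | ∃ S : Set V, IsGpSet G S ∧ S.ncard = n}

/-!
Internal vertices of a path have degree at least two, so a geodesic meets the leaves only in its
endpoints. Conversely, let `S` be in general position in the tree. A non-leaf `s ∈ S` has a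
neighbour `a` through which no path from `s` to the rest of `S` passes, since two blocked
neighbours would put `s` between two other points of `S`. A vertex farthest from `s` beyond `a`
is then a leaf `ℓ` such that `s` lies on the path from `ℓ` to every other point of `S`; a leaf
`s ∈ S` is its own `ℓ`. Two points of `S` with the same `ℓ` would each lie on the path from `ℓ`
to the other, which distances from `ℓ` rule out, so `s ↦ ℓ` injects `S` into the leaves.
-/

namespace SimpleGraph

variable {V : Type*} {G : SimpleGraph V}

theorem Walk.IsPath.two_le_degree {u v x : V} [Fintype (G.neighborSet x)] {p : G.Walk u v}
    (hp : p.IsPath) (hx : x ∈ p.support) (hxu : x ≠ u) (hxv : x ≠ v) : 2 ≤ G.degree x := by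
  obtain ⟨i, rfl, hi⟩ := Walk.mem_support_iff_exists_getVert.mp hx
  have hi0 : i ≠ 0 := by rintro rfl; exact hxu (Walk.getVert_zero p)
  have hil : i < p.length := lt_of_le_of_ne hi (by rintro rfl; exact hxv (Walk.getVert_length p))
  rw [← hp.ncard_neighborSet_toSubgraph_internal_eq_two hi0 hil, ← card_neighborSet_eq_degree,
    ← Nat.card_eq_fintype_card, Nat.card_coe_set_eq]
  exact Set.ncard_le_ncard (p.toSubgraph.neighborSet_subset _) (Set.toFinite _)

theorem isGpSet_setOf_degree_eq_one [Fintype V] [DecidableRel G.Adj] :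
    IsGpSet G {v | G.degree v = 1} := by
  intro u v p hp
  calc ({v | G.degree v = 1} ∩ {x | x ∈ p.support}).ncard ≤ ({u, v} : Set V).ncard := by
        refine Set.ncard_le_ncard (fun x ⟨hx1, hx⟩ => ?_) (Set.toFinite _)
        by_contra! hne
        have := hp.1.two_le_degree hx (fun h => hne (.inl h)) (fun h => hne (.inr h))
        rw [Set.mem_ofPred_eq] at hx1
        omega
    _ ≤ 2 := (Set.ncard_insert_le u {v}).trans (by simp)

theorem gpNum_eq_ncard {S₀ : Set V} (h₀ : IsGpSet G S₀)
    (hmax : ∀ S, IsGpSet G S → S.ncard ≤ S₀.ncard) : gpNum G = S₀.ncard :=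
  IsGreatest.csSup_eq ⟨⟨S₀, h₀, rfl⟩, by rintro _ ⟨S, hS, rfl⟩; exact hmax S hS⟩

namespace IsTree

variable (hG : G.IsTree)
include hG

noncomputable def path (u v : V) : G.Walk u v :=
  (hG.existsUnique_path u v).choose

theorem isPath_path (u v : V) : (hG.path u v).IsPath :=
  (hG.existsUnique_path u v).choose_spec.1

theorem eq_path {u v : V} {p : G.Walk u v} (hp : p.IsPath) : p = hG.path u v :=
  (hG.existsUnique_path u v).choose_spec.2 p hp

theorem length_path (u v : V) : (hG.path u v).length = G.dist u v := by
  obtain ⟨q, hq, hlen⟩ := (hG.connected u v).exists_path_of_dist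
  rw [← hG.eq_path hq, hlen]

theorem isGeodesicW_path (u v : V) : IsGeodesicW G (hG.path u v) :=
  ⟨hG.isPath_path u v, hG.length_path u v⟩

theorem mem_support_path_comm {u v x : V} :
    x ∈ (hG.path u v).support ↔ x ∈ (hG.path v u).support := by
  rw [← hG.eq_path (hG.isPath_path u v).reverse, Walk.support_reverse, List.mem_reverse]

theorem support_path_subset {u v x : V} (hx : x ∈ (hG.path u v).support) :
    (hG.path u x).support ⊆ (hG.path u v).support := by
  classical
  rw [← hG.eq_path ((hG.isPath_path u v).takeUntil hx)]
  exact Walk.support_takeUntil_subset_support _ hx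

theorem dist_add_dist_of_mem_support_path {u v x : V} (hx : x ∈ (hG.path u v).support) :
    G.dist u x + G.dist x v = G.dist u v := by
  classical
  have hp := hG.isPath_path u v
  rw [← hG.length_path, ← hG.length_path, ← hG.length_path, ← hG.eq_path (hp.takeUntil hx),
    ← hG.eq_path (hp.dropUntil hx), ← Walk.length_append, Walk.take_spec]

theorem eq_of_mem_support_path_of_mem_support_path {ℓ x y : V}
    (hx : x ∈ (hG.path ℓ y).support) (hy : y ∈ (hG.path ℓ x).support) : x = y := by
  have h₁ := hG.dist_add_dist_of_mem_support_path hx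
  have h₂ := hG.dist_add_dist_of_mem_support_path hy
  rw [dist_comm (u := y)] at h₂
  exact (hG.connected.dist_eq_zero_iff).mp (by omega)

theorem mem_support_path_or {x y z w : V} (hw : w ∈ (hG.path x z).support) :
    w ∈ (hG.path x y).support ∨ w ∈ (hG.path y z).support := by
  classical
  rw [← hG.eq_path ((hG.path x y).append (hG.path y z)).bypass_isPath] at hw
  exact (Walk.mem_support_append_iff _ _).mp (Walk.support_bypass_subset_support _ hw)

theorem mem_support_path_of_adj {s a x y : V} (hsa : G.Adj s a)
    (hax : a ∈ (hG.path s x).support) (hay : a ∉ (hG.path s y).support) :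
    s ∈ (hG.path x y).support := by
  have hayx : a ∈ (hG.path y x).support :=
    (hG.mem_support_path_or (y := y) hax).resolve_left hay
  have hsya : s ∈ (hG.path y a).support := by
    by_contra hs
    exact hay (hG.mem_support_path_comm.mp
      (hG.isAcyclic.mem_support_of_ne_mem_support_of_adj_of_isPath (hG.isPath_path y s)
        (hG.isPath_path y a) hsa hs))
  exact hG.mem_support_path_comm.mp (hG.support_path_subset hayx hsya)

theorem exists_degree_eq_one_mem_support_path [Fintype V] [DecidableRel G.Adj] {s a : V}
    (hsa : G.Adj s a) : ∃ ℓ, G.degree ℓ = 1 ∧ a ∈ (hG.path s ℓ).support := by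
  classical
  obtain ⟨ℓ, haℓ, hmax⟩ := Finset.exists_max_image
    (Finset.univ.filter fun x => a ∈ (hG.path s x).support) (G.dist s)
    ⟨a, by simp⟩
  simp only [Finset.mem_filter, Finset.mem_univ, true_and] at haℓ hmax
  refine ⟨ℓ, ?_, haℓ⟩
  have : Nontrivial V := ⟨⟨s, a, hsa.ne⟩⟩
  have hpos := hG.connected.preconnected.degree_pos_of_nontrivial ℓ
  by_contra hne
  obtain ⟨z₁, hz₁, z₂, hz₂, hz⟩ := Finset.one_lt_card.mp (show 1 < G.degree ℓ by omega)
  rw [mem_neighborFinset] at hz₁ hz₂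
  have hp := hG.isPath_path s ℓ
  obtain ⟨z, hℓz, hz⟩ : ∃ z, G.Adj ℓ z ∧ z ∉ (hG.path s ℓ).support := by
    by_contra! h
    exact hz ((hG.isAcyclic.eq_penultimate_of_adj_end hp hz₁ (h z₁ hz₁)).trans
      (hG.isAcyclic.eq_penultimate_of_adj_end hp hz₂ (h z₂ hz₂)).symm)
  have hℓ : ℓ ∈ (hG.path s z).support :=
    hG.isAcyclic.mem_support_of_ne_mem_support_of_adj_of_isPath (hG.isPath_path s z) hp
      hℓz.symm hz
  have hdist := hG.dist_add_dist_of_mem_support_path hℓ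
  rw [dist_eq_one_iff_adj.mpr hℓz] at hdist
  have := hmax z (hG.support_path_subset hℓ haℓ)
  omega

end IsTree

section GeneralPosition

variable {S : Set V} (hS : IsGpSet G S) (hG : G.IsTree)
include hS hG

theorem IsGpSet.eq_or_eq_of_mem_support_path {s t t' : V} (hs : s ∈ S) (ht : t ∈ S)
    (ht' : t' ∈ S) (hst : s ∈ (hG.path t t').support) : s = t ∨ s = t' := by
  by_contra! hne
  have htt' : t ≠ t' := by
    rintro rfl
    rw [← hG.eq_path Walk.IsPath.nil] at hst
    exact hne.1 (by simpa using hst)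
  have h3 : ({t, s, t'} : Set V).ncard = 3 := by
    rw [Set.ncard_insert_of_notMem (by simp [hne.1.symm, htt']), Set.ncard_pair hne.2]
  have hsub : ({t, s, t'} : Set V) ⊆ S ∩ {x | x ∈ (hG.path t t').support} := by
    rintro x (rfl | rfl | rfl)
    exacts [⟨ht, Walk.start_mem_support _⟩, ⟨hs, hst⟩, ⟨ht', Walk.end_mem_support _⟩]
  have := hS (hG.path t t') (hG.isGeodesicW_path t t')
  have := Set.ncard_le_ncard hsub ((List.finite_toSet _).inter_of_right S)
  omega

theorem IsGpSet.exists_adj_forall_notMem_support_path {s : V} [Fintype (G.neighborSet s)]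
    (hs : s ∈ S) (hdeg : 2 ≤ G.degree s) :
    ∃ a, G.Adj s a ∧ ∀ t ∈ S, t ≠ s → a ∉ (hG.path s t).support := by
  obtain ⟨a, ha, b, hb, hab⟩ := Finset.one_lt_card.mp (show 1 < G.degree s by omega)
  rw [mem_neighborFinset] at ha hb
  by_contra! h
  obtain ⟨ta, hta, htas, hata⟩ := h a ha
  obtain ⟨tb, htb, htbs, hbtb⟩ := h b hb
  have hatb : a ∉ (hG.path s tb).support := fun hatb =>
    hab ((hG.isAcyclic.eq_snd_of_adj_start (hG.isPath_path s tb) ha hatb).trans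
      (hG.isAcyclic.eq_snd_of_adj_start (hG.isPath_path s tb) hb hbtb).symm)
  obtain h | h := hS.eq_or_eq_of_mem_support_path hG hs hta htb
    (hG.mem_support_path_of_adj ha hata hatb)
  exacts [htas h.symm, htbs h.symm]

theorem IsGpSet.exists_degree_eq_one_forall_mem_support_path [Fintype V] [DecidableRel G.Adj]
    [Nontrivial V] {s : V} (hs : s ∈ S) :
    ∃ ℓ, G.degree ℓ = 1 ∧ ∀ t ∈ S, t ≠ s → s ∈ (hG.path ℓ t).support := by
  by_cases hleaf : G.degree s = 1
  · exact ⟨s, hleaf, fun t _ _ => Walk.start_mem_support _⟩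
  have hpos := hG.connected.preconnected.degree_pos_of_nontrivial s
  obtain ⟨a, hsa, hfree⟩ := hS.exists_adj_forall_notMem_support_path hG hs (by omega)
  obtain ⟨ℓ, hℓ, haℓ⟩ := hG.exists_degree_eq_one_mem_support_path hsa
  exact ⟨ℓ, hℓ, fun t ht hts => hG.mem_support_path_of_adj hsa haℓ (hfree t ht hts)⟩

theorem IsGpSet.ncard_le_ncard_setOf_degree_eq_one [Fintype V] [DecidableRel G.Adj]
    [Nontrivial V] : S.ncard ≤ {v | G.degree v = 1}.ncard := by
  choose! f hf using fun s (hs : s ∈ S) =>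
    hS.exists_degree_eq_one_forall_mem_support_path hG hs
  refine Set.ncard_le_ncard_of_injOn f (fun s hs => (hf s hs).1) ?_ (Set.toFinite _)
  intro s hs s' hs' hss'
  by_contra hne
  exact hne (hG.eq_of_mem_support_path_of_mem_support_path ((hf s hs).2 s' hs' (Ne.symm hne))
    (hss' ▸ (hf s' hs').2 s hs hne))

end GeneralPosition

end SimpleGraph

theorem tree_gp_eq_leaves_general {V : Type*} [Fintype V]
    (G : SimpleGraph V) [DecidableRel G.Adj] (hT : G.IsTree) (h2 : 2 ≤ Fintype.card V) :
    gpNum G = (Finset.univ.filter fun v => G.degree v = 1).card := by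
  have : Nontrivial V := Fintype.one_lt_card_iff_nontrivial.mp h2
  rw [gpNum_eq_ncard isGpSet_setOf_degree_eq_one
    fun S hS => hS.ncard_le_ncard_setOf_degree_eq_one hT, ← Set.ncard_coe_finset]
  simp

theorem tree_gp_eq_leaves {V : Type*} [Fintype V] [DecidableEq V]
    (G : SimpleGraph V) [DecidableRel G.Adj] (hT : G.IsTree) (h2 : 2 ≤ Fintype.card V) :
    gpNum G = (Finset.univ.filter fun v => G.degree v = 1).card :=
  tree_gp_eq_leaves_general G hT h2
end

section
/- For integers r_1 ≥ r_2 ≥ ... ≥ r_t ≥ 1, the general position number of the complete multipartite graph K_{r_1,...,r_t} equals max{r_1, t}. -/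
open SimpleGraph

/-! Every geodesic of a complete multipartite graph has length at most two, and the geodesics of
length two are the paths `u - w - v` with `u ≠ v` in one part and `w` in another. So a set is in
general position exactly when it meets every part at most once or lies inside a single part; its
size is then at most `t` or at most the largest part size `r₁`, and a transversal and a largest part
attain these bounds. -/

theorem Set.ncard_le_two_of_subset_pair {α : Type*} {s : Set α} {a b : α} (h : s ⊆ {a, b}) :
    s.ncard ≤ 2 :=
  (Set.ncard_le_ncard h).trans ((Set.ncard_insert_le a {b}).trans (by simp))

theorem Set.ncard_inter_le_two_of_not_subset {α : Type*} {s : Set α} {a b c : α}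
    (h : ¬{a, b, c} ⊆ s) : (s ∩ {a, b, c}).ncard ≤ 2 := by
  simp only [Set.insert_subset_iff, Set.singleton_subset_iff, not_and_or] at h
  rcases h with h | h | h
  · exact Set.ncard_le_two_of_subset_pair (a := b) (b := c) fun x ⟨hxs, hx⟩ => by
      rcases hx with rfl | rfl | rfl <;> simp_all
  · exact Set.ncard_le_two_of_subset_pair (a := a) (b := c) fun x ⟨hxs, hx⟩ => by
      rcases hx with rfl | rfl | rfl <;> simp_all
  · exact Set.ncard_le_two_of_subset_pair (a := a) (b := b) fun x ⟨hxs, hx⟩ => by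
      rcases hx with rfl | rfl | rfl <;> simp_all

theorem gpNum_eq_of_exists_of_forall_le {V : Type*} {G : SimpleGraph V} {n : ℕ}
    (hS : ∃ S, IsGpSet G S ∧ S.ncard = n) (hle : ∀ S, IsGpSet G S → S.ncard ≤ n) : gpNum G = n :=
  IsGreatest.csSup_eq ⟨hS, by rintro _ ⟨S, hS, rfl⟩; exact hle S hS⟩

theorem isGeodesicW_cons_cons_nil_iff {V : Type*} {G : SimpleGraph V} {u w v : V}
    (hu : G.Adj u w) (hw : G.Adj w v) :
    IsGeodesicW G (.cons hu (.cons hw .nil)) ↔ u ≠ v ∧ ¬G.Adj u v := by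
  constructor
  · rintro ⟨hpath, hlen⟩
    refine ⟨fun huv => ?_, fun hadj => ?_⟩
    · subst huv
      simp at hpath
    · simp [dist_eq_one_iff_adj.mpr hadj] at hlen
  · rintro ⟨huv, hnadj⟩
    refine ⟨by simp [hu.ne, hw.ne, huv], ?_⟩
    have hlower := (Walk.cons hu (.cons hw .nil)).reachable.one_lt_dist_of_ne_of_not_adj huv hnadj
    have hupper : G.dist u v ≤ 2 := dist_le (.cons hu (.cons hw .nil))
    simp only [Walk.length_cons, Walk.length_nil]
    omega

namespace completeMultipartiteGraph

variable {ι : Type*} {V : ι → Type*}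

theorem adj_iff {u v : Σ i, V i} : (completeMultipartiteGraph V).Adj u v ↔ u.1 ≠ v.1 := Iff.rfl

theorem dist_le_two_of_reachable {u v : Σ i, V i}
    (h : (completeMultipartiteGraph V).Reachable u v) :
    (completeMultipartiteGraph V).dist u v ≤ 2 := by
  obtain ⟨p⟩ := h
  by_cases huv : u.1 = v.1
  · cases p with
    | nil => simp
    | cons hu _ =>
      have hw := adj_iff.mpr (huv ▸ (adj_iff.mp hu).symm)
      exact dist_le (.cons hu (.cons hw .nil))
  · exact (dist_le (.cons (adj_iff.mpr huv) .nil)).trans (by simp)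

theorem length_le_two_of_isGeodesicW {u v : Σ i, V i} {p : (completeMultipartiteGraph V).Walk u v}
    (hp : IsGeodesicW _ p) : p.length ≤ 2 :=
  hp.2 ▸ dist_le_two_of_reachable ⟨p⟩

theorem isGpSet_iff {S : Set (Σ i, V i)} :
    IsGpSet (completeMultipartiteGraph V) S ↔
      S.InjOn Sigma.fst ∨ ∃ i, S ⊆ Sigma.fst ⁻¹' {i} := by
  constructor
  · intro hS
    refine or_iff_not_imp_left.mpr fun hinj => ?_
    obtain ⟨u, hu, v, hv, huv, hne⟩ : ∃ u ∈ S, ∃ v ∈ S, u.1 = v.1 ∧ u ≠ v := by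
      simpa [Set.InjOn] using hinj
    refine ⟨u.1, fun w hw => by_contra fun hwu => ?_⟩
    have huw : (completeMultipartiteGraph V).Adj u w := adj_iff.mpr (Ne.symm hwu)
    have hwv : (completeMultipartiteGraph V).Adj w v := adj_iff.mpr (huv ▸ hwu)
    have hgeo := (isGeodesicW_cons_cons_nil_iff huw hwv).mpr ⟨hne, by simpa using huv⟩
    have hcard := hS _ hgeo
    have hsupp : S ∩ {x | x ∈ (Walk.cons huw (.cons hwv .nil)).support} = {u, w, v} := by
      ext x
      simp only [Walk.support_cons, Walk.support_nil]
      aesop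
    rw [hsupp, Set.ncard_eq_three.mpr ⟨u, w, v, huw.ne, hne, hwv.ne, rfl⟩] at hcard
    omega
  · intro hS u v p hp
    have hlen := length_le_two_of_isGeodesicW hp
    match p, hp, hlen with
    | .nil, _, _ =>
      exact Set.ncard_le_two_of_subset_pair (a := u) (b := u) fun x hx => by simpa using hx.2
    | .cons _ .nil, _, _ =>
      exact Set.ncard_le_two_of_subset_pair (a := u) (b := v) fun x hx => by simpa using hx.2
    | .cons (v := w) hu (.cons hw .nil), hp, _ =>
      obtain ⟨hne, hnadj⟩ := (isGeodesicW_cons_cons_nil_iff hu hw).mp hp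
      have hsupp : {x | x ∈ (Walk.cons hu (.cons hw .nil)).support} = {u, w, v} := by
        ext x; simp
      rw [hsupp]
      refine Set.ncard_inter_le_two_of_not_subset fun huwv => ?_
      simp only [Set.insert_subset_iff, Set.singleton_subset_iff] at huwv
      rcases hS with hinj | ⟨i, hi⟩
      · exact hne (hinj huwv.1 huwv.2.2 (not_not.mp (mt adj_iff.mpr hnadj)))
      · exact adj_iff.mp hu ((hi huwv.1).trans (hi huwv.2.1).symm)
    | .cons _ (.cons _ (.cons _ _)), _, hlen => simp at hlen

theorem isGpSet_preimage_fst_singleton (i : ι) :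
    IsGpSet (completeMultipartiteGraph V) (Sigma.fst ⁻¹' {i}) :=
  isGpSet_iff.mpr (.inr ⟨i, subset_rfl⟩)

theorem isGpSet_range_sigmaMk (f : ∀ i, V i) :
    IsGpSet (completeMultipartiteGraph V) (Set.range fun i => ⟨i, f i⟩) :=
  isGpSet_iff.mpr (.inl (Function.Injective.injOn_range (g := Sigma.fst) Function.injective_id))

theorem ncard_range_sigmaMk (f : ∀ i, V i) :
    (Set.range fun i => (⟨i, f i⟩ : Σ i, V i)).ncard = Nat.card ι :=
  Set.ncard_range_of_injective fun _ _ h => congrArg Sigma.fst h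

theorem ncard_preimage_fst_singleton (i : ι) :
    (Sigma.fst ⁻¹' {i} : Set (Σ i, V i)).ncard = Nat.card (V i) := by
  rw [← Set.range_sigmaMk, Set.ncard_range_of_injective sigma_mk_injective]

theorem ncard_le_of_isGpSet [Finite ι] [∀ i, Finite (V i)] {S : Set (Σ i, V i)}
    (hS : IsGpSet (completeMultipartiteGraph V) S) :
    S.ncard ≤ Nat.card ι ∨ ∃ i, S.ncard ≤ Nat.card (V i) := by
  rcases isGpSet_iff.mp hS with hinj | ⟨i, hi⟩
  · refine .inl ?_
    simpa using Set.ncard_le_ncard_of_injOn Sigma.fst (fun _ _ => Set.mem_univ _) hinj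
  · exact .inr ⟨i, ncard_preimage_fst_singleton (V := V) i ▸ Set.ncard_le_ncard hi⟩

end completeMultipartiteGraph

open completeMultipartiteGraph in
theorem completeMultipartite_gpNum (t : ℕ) (ht : 0 < t) (r : Fin t → ℕ)
    (hr : ∀ i, 1 ≤ r i) (hmono : ∀ i j : Fin t, i ≤ j → r j ≤ r i) :
    gpNum (completeMultipartiteGraph fun i => Fin (r i)) = max (r ⟨0, ht⟩) t := by
  apply gpNum_eq_of_exists_of_forall_le
  · rcases le_total t (r ⟨0, ht⟩) with h | h
    · refine ⟨_, isGpSet_preimage_fst_singleton ⟨0, ht⟩, ?_⟩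
      simp [ncard_preimage_fst_singleton, h]
    · refine ⟨_, isGpSet_range_sigmaMk fun i => (⟨0, hr i⟩ : Fin (r i)), ?_⟩
      simp [ncard_range_sigmaMk, h]
  · intro S hS
    have hbound := ncard_le_of_isGpSet hS
    simp only [Nat.card_eq_fintype_card, Fintype.card_fin] at hbound
    rcases hbound with h | ⟨i, h⟩
    · exact le_max_of_le_right h
    · exact le_max_of_le_left (h.trans (hmono _ i (Fin.mk_le_of_le_val (Nat.zero_le _))))
end
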